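/- arXiv:2202.09489 — 5 statements merged into one kernel-verified Lean document; each statement's English description precedes it below -/
import Mathlib

section
/- Let S be a type, φ : S → ℝ a function bounded in absolute value by a constant B ≥ 0, s : ℕ → S a sequence of states, and γ a real number with 0 ≤ γ < 1. Then the series ∑_{t=0}^{∞} γ^t · (γ · φ(s(t+1)) − φ(s(t))) is summable and its sum equals −φ(s(0)). -/
theorem discounted_shaping_advice_sums_to_neg_initial_potential
    (S : Type*) (φ : S → ℝ) (B : ℝ) (hB : 0 ≤ B) (hφ : ∀ x, |φ x| ≤ B)
    (s : ℕ → S) (γ : ℝ) (hγ0 : 0 ≤ γ) (hγ1 : γ < 1) :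
    Summable (fun t : ℕ => γ ^ t * (γ * φ (s (t + 1)) - φ (s t))) ∧
      ∑' t : ℕ, γ ^ t * (γ * φ (s (t + 1)) - φ (s t)) = -φ (s 0) := by
  set g : ℕ → ℝ := fun t => γ ^ t * (γ * φ (s (t + 1)) - φ (s t)) with hg
  have hsum : Summable g := by
    have hmaj : Summable (fun t : ℕ => (2 * B) * γ ^ t) :=
      (summable_geometric_of_lt_one hγ0 hγ1).mul_left _
    refine Summable.of_norm (Summable.of_nonneg_of_le (fun t => norm_nonneg _) ?_ hmaj)
    intro t
    have h1 : |γ * φ (s (t + 1)) - φ (s t)| ≤ 2 * B := by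
        calc |γ * φ (s (t + 1)) - φ (s t)| ≤ |γ * φ (s (t+1))| + |φ (s t)| :=
              abs_sub _ _
          _ ≤ 1 * B + B := by
              gcongr ?_ + ?_
              case h₂ => exact hφ _
              rw [abs_mul]
              have := hφ (s (t+1))
              have : |γ| * |φ (s (t+1))| ≤ 1 * B := by
                apply mul_le_mul (by rw [abs_of_nonneg hγ0]; linarith) (hφ _)
                  (abs_nonneg _) zero_le_one
              linarith
          _ = 2 * B := by ring
    have hpow : (0:ℝ) ≤ γ ^ t := pow_nonneg hγ0 t
    calc ‖g t‖ = γ ^ t * |γ * φ (s (t + 1)) - φ (s t)| := by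
          simp [hg, abs_mul, abs_pow, abs_of_nonneg hγ0]
      _ ≤ γ ^ t * (2 * B) := by gcongr
      _ = (2 * B) * γ ^ t := by ring
  refine ⟨hsum, ?_⟩
  -- telescoping partial sums
  have hpartial : ∀ n, ∑ t ∈ Finset.range n, g t = γ ^ n * φ (s n) - φ (s 0) := by
    intro n
    induction n with
    | zero => simp
    | succ n ih =>
      rw [Finset.sum_range_succ, ih]
      simp only [hg]
      ring
  have htend0 : Filter.Tendsto (fun n => γ ^ n * φ (s n)) Filter.atTop (nhds 0) := by
    have hgeo : Filter.Tendsto (fun n => B * γ ^ n) Filter.atTop (nhds 0) := by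
      simpa using (tendsto_pow_atTop_nhds_zero_of_lt_one hγ0 hγ1).const_mul B
    apply squeeze_zero_norm _ hgeo
    intro n
    have hpow : (0:ℝ) ≤ γ ^ n := pow_nonneg hγ0 n
    calc ‖γ ^ n * φ (s n)‖ = γ ^ n * |φ (s n)| := by
          simp [abs_mul, abs_pow, abs_of_nonneg hγ0]
      _ ≤ γ ^ n * B := by gcongr; exact hφ _
      _ = B * γ ^ n := by ring
  have htend : Filter.Tendsto (fun n => ∑ t ∈ Finset.range n, g t)
      Filter.atTop (nhds (-φ (s 0))) := by
    simp only [hpartial]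
    simpa using htend0.sub_const (φ (s 0))
  exact tendsto_nhds_unique hsum.hasSum.tendsto_sum_nat htend
end

section
/- Let S and A be measurable spaces, let μ be a probability measure on the trajectory space (ℕ → S × A) with its product σ-algebra, let R : S × A → ℝ be a bounded measurable reward function, let φ : S → ℝ be a bounded measurable potential function, and let γ be a real number with 0 ≤ γ < 1. Then ∫ (∑_{t=0}^{∞} γ^t · (R(τ(t)) + γ·φ(state of τ(t+1)) − φ(state of τ(t)))) dμ(τ) = ∫ (∑_{t=0}^{∞} γ^t · R(τ(t))) dμ(τ) − ∫ φ(state of τ(0)) dμ(τ), where 'state of τ(t)' denotes the first component of the pair τ(t) ∈ S × A. -/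
open MeasureTheory

theorem shaped_expected_return_eq
    {S A : Type*} [MeasurableSpace S] [MeasurableSpace A]
    (μ : Measure (ℕ → S × A)) [IsProbabilityMeasure μ]
    (R : S × A → ℝ) (hRm : Measurable R) (CR : ℝ) (hRb : ∀ x, |R x| ≤ CR)
    (φ : S → ℝ) (hφm : Measurable φ) (Cφ : ℝ) (hφb : ∀ x, |φ x| ≤ Cφ)
    (γ : ℝ) (hγ0 : 0 ≤ γ) (hγ1 : γ < 1) :
    ∫ τ, (∑' t : ℕ, γ ^ t * (R (τ t) + (γ * φ (τ (t + 1)).1 - φ (τ t).1))) ∂μ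
      = (∫ τ, (∑' t : ℕ, γ ^ t * R (τ t)) ∂μ) - ∫ τ, φ (τ 0).1 ∂μ := by
  have hgeo : Summable (fun t : ℕ => γ ^ t) := summable_geometric_of_lt_one hγ0 hγ1
  have habsR : ∀ (τ : ℕ → S × A) (t : ℕ), |γ ^ t * R (τ t)| ≤ γ ^ t * CR := by
    intro τ t
    rw [abs_mul, abs_pow, abs_of_nonneg hγ0]
    exact mul_le_mul_of_nonneg_left (hRb _) (pow_nonneg hγ0 t)
  have hsumRabs : ∀ τ : ℕ → S × A, Summable (fun t : ℕ => |γ ^ t * R (τ t)|) := fun τ =>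
    Summable.of_nonneg_of_le (fun _ => abs_nonneg _) (habsR τ) (hgeo.mul_right CR)
  have hsumR : ∀ τ : ℕ → S × A, Summable (fun t : ℕ => γ ^ t * R (τ t)) := fun τ =>
    (hsumRabs τ).of_abs
  have hsumφ : ∀ τ : ℕ → S × A, Summable (fun t : ℕ => γ ^ t * φ ((τ t)).1) := by
    intro τ
    apply Summable.of_abs
    apply Summable.of_nonneg_of_le (fun _ => abs_nonneg _) (fun t => ?_) (hgeo.mul_right Cφ)
    rw [abs_mul, abs_pow, abs_of_nonneg hγ0]
    exact mul_le_mul_of_nonneg_left (hφb _) (pow_nonneg hγ0 t)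
  have hsumφ' : ∀ τ : ℕ → S × A, Summable (fun t : ℕ => γ ^ t * (γ * φ ((τ (t+1))).1)) := by
    intro τ
    have h1 : Summable (fun t : ℕ => γ ^ (t+1) * φ ((τ (t+1))).1) :=
      (hsumφ τ).comp_injective (add_left_injective 1)
    exact h1.congr (fun t => by rw [pow_succ]; ring)
  -- telescoping: ∑ γ^t (γ φ_{t+1} - φ_t) = - φ_0
  have htel : ∀ τ : ℕ → S × A,
      ∑' t : ℕ, γ ^ t * (γ * φ ((τ (t+1))).1 - φ ((τ t)).1) = - φ ((τ 0)).1 := by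
    intro τ
    set b : ℕ → ℝ := fun t => γ ^ t * φ ((τ t)).1 with hb
    have hkey : ∀ t : ℕ, γ ^ t * (γ * φ ((τ (t+1))).1 - φ ((τ t)).1) = b (t+1) - b t := by
      intro t; simp only [hb, pow_succ]; ring
    have hsumb : Summable (fun t => b (t+1) - b t) := by
      have h1 : Summable (fun t => b (t+1)) := (hsumφ τ).comp_injective (add_left_injective 1)
      exact h1.sub (hsumφ τ)
    have hbtends : Filter.Tendsto b Filter.atTop (nhds 0) := by
      have h2 : Filter.Tendsto (fun t : ℕ => γ ^ t * Cφ) Filter.atTop (nhds 0) := by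
        simpa using (tendsto_pow_atTop_nhds_zero_of_lt_one hγ0 hγ1).mul_const Cφ
      apply squeeze_zero_norm _ h2
      intro t
      rw [hb, Real.norm_eq_abs, abs_mul, abs_pow, abs_of_nonneg hγ0]
      exact mul_le_mul_of_nonneg_left (hφb _) (pow_nonneg hγ0 t)
    have hhs : HasSum (fun t => b (t+1) - b t) (0 - b 0) := by
      rw [hsumb.hasSum_iff_tendsto_nat]
      have h3 : ∀ n : ℕ, ∑ i ∈ Finset.range n, (b (i+1) - b i) = b n - b 0 :=
        fun n => Finset.sum_range_sub b n
      simp only [h3]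
      exact hbtends.sub tendsto_const_nhds
    calc ∑' t : ℕ, γ ^ t * (γ * φ ((τ (t+1))).1 - φ ((τ t)).1)
        = ∑' t : ℕ, (b (t+1) - b t) := tsum_congr hkey
      _ = 0 - b 0 := hhs.tsum_eq
      _ = - φ ((τ 0)).1 := by simp [hb]
  -- pointwise decomposition
  have hpt : ∀ τ : ℕ → S × A,
      (∑' t : ℕ, γ ^ t * (R (τ t) + (γ * φ ((τ (t+1))).1 - φ ((τ t)).1)))
        = (∑' t : ℕ, γ ^ t * R (τ t)) - φ ((τ 0)).1 := by
    intro τ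
    have hsumD : Summable (fun t : ℕ => γ ^ t * (γ * φ ((τ (t+1))).1 - φ ((τ t)).1)) := by
      have := (hsumφ' τ).sub (hsumφ τ)
      simpa [mul_sub] using this
    have hsplit : ∑' t : ℕ, γ ^ t * (R (τ t) + (γ * φ ((τ (t+1))).1 - φ ((τ t)).1))
        = (∑' t : ℕ, γ ^ t * R (τ t))
          + ∑' t : ℕ, γ ^ t * (γ * φ ((τ (t+1))).1 - φ ((τ t)).1) := by
      rw [← Summable.tsum_add (hsumR τ) hsumD]
      exact tsum_congr (fun t => by ring)
    rw [hsplit, htel τ]; ring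
  rw [integral_congr_ae (Filter.Eventually.of_forall hpt)]
  -- measurability and integrability
  have hmeasR : Measurable fun τ : ℕ → S × A => ∑' t : ℕ, γ ^ t * R (τ t) := by
    have hg : ∀ n : ℕ, Measurable fun τ : ℕ → S × A =>
        ∑ t ∈ Finset.range n, γ ^ t * R (τ t) := by
      intro n
      exact Finset.measurable_sum _ fun t _ =>
        ((hRm.comp (measurable_pi_apply t)).const_mul _)
    apply measurable_of_tendsto_metrizable hg
    rw [tendsto_pi_nhds]
    intro τ
    exact (hsumR τ).hasSum.tendsto_sum_nat
  have hmeasφ0 : Measurable fun τ : ℕ → S × A => φ ((τ 0)).1 :=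
    hφm.comp (measurable_fst.comp (measurable_pi_apply 0))
  have hintR : Integrable (fun τ : ℕ → S × A => ∑' t : ℕ, γ ^ t * R (τ t)) μ := by
    apply Integrable.mono' (integrable_const (CR * (1 - γ)⁻¹)) hmeasR.aestronglyMeasurable
    apply Filter.Eventually.of_forall
    intro τ
    rw [Real.norm_eq_abs]
    calc |∑' t : ℕ, γ ^ t * R (τ t)| ≤ ∑' t : ℕ, |γ ^ t * R (τ t)| := by
          have h := norm_tsum_le_tsum_norm (f := fun t : ℕ => γ ^ t * R (τ t))
            ((hsumRabs τ).congr (fun t => (Real.norm_eq_abs _).symm))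
          simpa only [Real.norm_eq_abs] using h
      _ ≤ ∑' t : ℕ, γ ^ t * CR :=
          Summable.tsum_le_tsum (habsR τ) (hsumRabs τ) (hgeo.mul_right CR)
      _ = CR * (1 - γ)⁻¹ := by
          rw [tsum_mul_right, tsum_geometric_of_lt_one hγ0 hγ1]; ring
  have hintφ : Integrable (fun τ : ℕ → S × A => φ ((τ 0)).1) μ := by
    apply Integrable.mono' (integrable_const Cφ) hmeasφ0.aestronglyMeasurable
    exact Filter.Eventually.of_forall fun τ => hφb _
  exact integral_sub hintR hintφ
end

section
/- Let S and A be measurable spaces, R : S × A → ℝ a bounded measurable reward, φ : S → ℝ a bounded measurable potential, and γ a real number with 0 ≤ γ < 1. Let Π be a nonempty set (of policies) and for each π ∈ Π let μ(π) be a probability measure on the trajectory space (ℕ → S × A). Define J(π) = ∫ ∑_{t=0}^{∞} γ^t · R(τ(t)) dμ(π)(τ) and J'(π) = ∫ ∑_{t=0}^{∞} γ^t · (R(τ(t)) + γ·φ(state of τ(t+1)) − φ(state of τ(t))) dμ(π)(τ). Assume all measures μ(π) have the same initial-state marginal, i.e., the pushforward of μ(π) under the map τ ↦ (first component of τ(0))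 is a fixed probability measure ρ₀ on S, independent of π. Then for every π* ∈ Π, π* maximizes J' over Π if and only if π* maximizes J over Π. -/
/-!
Along every trajectory the discounted shaping terms `γ^(t+1) φ(s_{t+1}) - γ^t φ(s_t)` telescope,
so the shaped return is the original return minus `φ(s₀)`. Integrating gives
`J' π = J π - ∫ φ dρ₀`, a shift independent of `π` because every policy induces the same
initial-state distribution; hence `J` and `J'` have the same maximisers.
-/

open MeasureTheory

theorem Summable.tsum_succ_sub {G : Type*} [AddCommGroup G] [TopologicalSpace G]
    [IsTopologicalAddGroup G] [T2Space G] {a : ℕ → G} (ha : Summable a) :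
    ∑' t, (a (t + 1) - a t) = -a 0 := by
  rw [((summable_nat_add_iff 1).2 ha).tsum_sub ha, ha.tsum_eq_zero_add]
  abel

theorem measurable_tsum_of_summable {X E : Type*} [MeasurableSpace X] [AddCommMonoid E]
    [TopologicalSpace E] [TopologicalSpace.PseudoMetrizableSpace E] [MeasurableSpace E]
    [BorelSpace E] [MeasurableAdd₂ E] {f : ℕ → X → E} (hf : ∀ n, Measurable (f n))
    (hs : ∀ x, Summable fun n => f n x) : Measurable fun x => ∑' n, f n x :=
  measurable_of_tendsto_metrizable (fun _ => Finset.measurable_sum _ fun n _ => hf n)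
    (tendsto_pi_nhds.2 fun x => (hs x).hasSum.tendsto_sum_nat)

section Discounting

variable {γ : ℝ} {C : ℝ} {g : ℕ → ℝ}

theorem abs_pow_mul_le (hγ0 : 0 ≤ γ) (hg : ∀ t, |g t| ≤ C) (t : ℕ) :
    |γ ^ t * g t| ≤ C * γ ^ t := by
  rw [abs_mul, abs_of_nonneg (pow_nonneg hγ0 t), mul_comm]
  exact mul_le_mul_of_nonneg_right (hg t) (pow_nonneg hγ0 t)

theorem summable_pow_mul_of_abs_le (hγ0 : 0 ≤ γ) (hγ1 : γ < 1) (hg : ∀ t, |g t| ≤ C) :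
    Summable fun t => γ ^ t * g t :=
  ((summable_geometric_of_lt_one hγ0 hγ1).mul_left C).of_norm_bounded (abs_pow_mul_le hγ0 hg)

theorem abs_tsum_pow_mul_le (hγ0 : 0 ≤ γ) (hγ1 : γ < 1) (hg : ∀ t, |g t| ≤ C) :
    |∑' t, γ ^ t * g t| ≤ C / (1 - γ) := by
  rw [div_eq_mul_inv, ← Real.norm_eq_abs]
  exact tsum_of_norm_bounded ((hasSum_geometric_of_lt_one hγ0 hγ1).mul_left C)
    (abs_pow_mul_le hγ0 hg)

theorem tsum_pow_mul_add_shaping (hγ0 : 0 ≤ γ) (hγ1 : γ < 1) (hg : ∀ t, |g t| ≤ C)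
    {f : ℕ → ℝ} {Cf : ℝ} (hf : ∀ t, |f t| ≤ Cf) :
    ∑' t, γ ^ t * (g t + (γ * f (t + 1) - f t)) = ∑' t, γ ^ t * g t - f 0 := by
  set a : ℕ → ℝ := fun t => γ ^ t * f t with ha
  have hsa : Summable a := summable_pow_mul_of_abs_le hγ0 hγ1 hf
  have hsplit : (fun t => γ ^ t * (g t + (γ * f (t + 1) - f t)))
      = fun t => γ ^ t * g t + (a (t + 1) - a t) := by
    funext t
    simp only [ha, pow_succ]
    ring
  rw [hsplit, (summable_pow_mul_of_abs_le hγ0 hγ1 hg).tsum_add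
    (((summable_nat_add_iff 1).2 hsa).sub hsa), hsa.tsum_succ_sub]
  simp [ha, sub_eq_add_neg]

end Discounting

section Trajectories

variable {X : Type*} [MeasurableSpace X] {μ : Measure (ℕ → X)} {γ : ℝ}

theorem integrable_tsum_pow_mul [IsFiniteMeasure μ] (hγ0 : 0 ≤ γ) (hγ1 : γ < 1)
    {R : X → ℝ} (hRm : Measurable R) {C : ℝ} (hR : ∀ x, |R x| ≤ C) :
    Integrable (fun τ : ℕ → X => ∑' t, γ ^ t * R (τ t)) μ :=
  have hm : Measurable fun τ : ℕ → X => ∑' t, γ ^ t * R (τ t) :=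
    measurable_tsum_of_summable (fun t => (hRm.comp (measurable_pi_apply t)).const_mul _)
      fun τ => summable_pow_mul_of_abs_le hγ0 hγ1 fun t => hR (τ t)
  .of_bound hm.aestronglyMeasurable (C / (1 - γ))
    (ae_of_all _ fun τ => abs_tsum_pow_mul_le hγ0 hγ1 fun t => hR (τ t))

theorem integral_tsum_pow_mul_add_shaping [IsFiniteMeasure μ] (hγ0 : 0 ≤ γ) (hγ1 : γ < 1)
    {R : X → ℝ} (hRm : Measurable R) {CR : ℝ} (hR : ∀ x, |R x| ≤ CR)
    {Φ : X → ℝ} (hΦm : Measurable Φ) {CΦ : ℝ} (hΦ : ∀ x, |Φ x| ≤ CΦ) :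
    ∫ τ, ∑' t, γ ^ t * (R (τ t) + (γ * Φ (τ (t + 1)) - Φ (τ t))) ∂μ
      = ∫ τ, ∑' t, γ ^ t * R (τ t) ∂μ - ∫ τ, Φ (τ 0) ∂μ := by
  have hΦ0 : Integrable (fun τ : ℕ → X => Φ (τ 0)) μ :=
    .of_bound (hΦm.comp (measurable_pi_apply 0)).aestronglyMeasurable CΦ
      (ae_of_all _ fun τ => hΦ (τ 0))
  rw [← integral_sub (integrable_tsum_pow_mul hγ0 hγ1 hRm hR) hΦ0]
  exact integral_congr_ae (ae_of_all _ fun τ =>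
    tsum_pow_mul_add_shaping hγ0 hγ1 (fun t => hR (τ t)) fun t => hΦ (τ t))

end Trajectories

theorem uniform_advice_preserves_optimal_policies_general
    {S A : Type*} [MeasurableSpace S] [MeasurableSpace A]
    {P : Type*}
    (μ : P → Measure (ℕ → S × A)) [∀ p, IsProbabilityMeasure (μ p)]
    (R : S × A → ℝ) (hRm : Measurable R) (CR : ℝ) (hRb : ∀ x, |R x| ≤ CR)
    (φ : S → ℝ) (hφm : Measurable φ) (Cφ : ℝ) (hφb : ∀ x, |φ x| ≤ Cφ)
    (γ : ℝ) (hγ0 : 0 ≤ γ) (hγ1 : γ < 1)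
    (ρ₀ : Measure S)
    (hρ : ∀ p, (μ p).map (fun τ => (τ 0).1) = ρ₀)
    (J J' : P → ℝ)
    (hJ : ∀ p, J p = ∫ τ, (∑' t : ℕ, γ ^ t * R (τ t)) ∂(μ p))
    (hJ' : ∀ p, J' p
        = ∫ τ, (∑' t : ℕ, γ ^ t * (R (τ t) + (γ * φ (τ (t + 1)).1 - φ (τ t).1))) ∂(μ p))
    (πstar : P) :
    (∀ p, J' p ≤ J' πstar) ↔ (∀ p, J p ≤ J πstar) := by
  have hshift : ∀ p, J' p = J p - ∫ s, φ s ∂ρ₀ := fun p => by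
    rw [hJ', hJ, integral_tsum_pow_mul_add_shaping (Φ := fun x => φ x.1) hγ0 hγ1 hRm hRb
      (hφm.comp measurable_fst) fun x => hφb x.1, ← hρ p,
      integral_map (measurable_pi_apply 0).fst.aemeasurable hφm.aestronglyMeasurable]
  simp only [hshift, sub_le_sub_iff_right]

theorem uniform_advice_preserves_optimal_policies
    {S A : Type*} [MeasurableSpace S] [MeasurableSpace A]
    {P : Type*} [Nonempty P]
    (μ : P → Measure (ℕ → S × A)) [∀ p, IsProbabilityMeasure (μ p)]
    (R : S × A → ℝ) (hRm : Measurable R) (CR : ℝ) (hRb : ∀ x, |R x| ≤ CR)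
    (φ : S → ℝ) (hφm : Measurable φ) (Cφ : ℝ) (hφb : ∀ x, |φ x| ≤ Cφ)
    (γ : ℝ) (hγ0 : 0 ≤ γ) (hγ1 : γ < 1)
    (ρ₀ : Measure S) [IsProbabilityMeasure ρ₀]
    (hρ : ∀ p, (μ p).map (fun τ => (τ 0).1) = ρ₀)
    (J J' : P → ℝ)
    (hJ : ∀ p, J p = ∫ τ, (∑' t : ℕ, γ ^ t * R (τ t)) ∂(μ p))
    (hJ' : ∀ p, J' p
        = ∫ τ, (∑' t : ℕ, γ ^ t * (R (τ t) + (γ * φ (τ (t + 1)).1 - φ (τ t).1))) ∂(μ p))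
    (πstar : P) :
    (∀ p, J' p ≤ J' πstar) ↔ (∀ p, J p ≤ J πstar) :=
  uniform_advice_preserves_optimal_policies_general μ R hRm CR hRb φ hφm Cφ hφb γ hγ0 hγ1 ρ₀ hρ J J'
    hJ hJ' πstar
end

section
/- Let S and A be measurable spaces, let μ be a probability measure on the trajectory space (ℕ → S × A) with its product σ-algebra, let R : S × A → ℝ be a bounded measurable reward, let φ : S × A → ℝ be a bounded measurable state–action potential, and let γ be a real number with 0 ≤ γ < 1. Then ∫ (∑_{t=0}^{∞} γ^t · (R(τ(t)) + γ·φ(τ(t+1)) − φ(τ(t)))) dμ(τ) = ∫ (∑_{t=0}^{∞} γ^t · R(τ(t))) dμ(τ) − ∫ φ(τ(0)) dμ(τ). -/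
open MeasureTheory

theorem lookahead_nonuniform_shaped_return_eq
    {S A : Type*} [MeasurableSpace S] [MeasurableSpace A]
    (μ : Measure (ℕ → S × A)) [IsProbabilityMeasure μ]
    (R : S × A → ℝ) (hRm : Measurable R) (CR : ℝ) (hRb : ∀ x, |R x| ≤ CR)
    (φ : S × A → ℝ) (hφm : Measurable φ) (Cφ : ℝ) (hφb : ∀ x, |φ x| ≤ Cφ)
    (γ : ℝ) (hγ0 : 0 ≤ γ) (hγ1 : γ < 1) :
    ∫ τ, (∑' t : ℕ, γ ^ t * (R (τ t) + (γ * φ (τ (t + 1)) - φ (τ t)))) ∂μ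
      = (∫ τ, (∑' t : ℕ, γ ^ t * R (τ t)) ∂μ) - ∫ τ, φ (τ 0) ∂μ := by
  have hgeo : Summable (fun t : ℕ => γ ^ t) := summable_geometric_of_lt_one hγ0 hγ1
  -- pointwise summability facts
  have hbsum : ∀ τ : ℕ → S × A, Summable (fun t : ℕ => γ ^ t * R (τ t)) := by
    intro τ
    apply Summable.of_norm
    apply Summable.of_nonneg_of_le (fun t => norm_nonneg _)
      (fun t => ?_) (hgeo.mul_right CR)
    have : |γ ^ t * R (τ t)| = γ ^ t * |R (τ t)| := by
      rw [abs_mul, abs_of_nonneg (pow_nonneg hγ0 t)]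
    rw [Real.norm_eq_abs, this]
    exact mul_le_mul_of_nonneg_left (hRb _) (pow_nonneg hγ0 t)
  have hasum : ∀ τ : ℕ → S × A, Summable (fun t : ℕ => γ ^ t * φ (τ t)) := by
    intro τ
    apply Summable.of_norm
    apply Summable.of_nonneg_of_le (fun t => norm_nonneg _)
      (fun t => ?_) (hgeo.mul_right Cφ)
    have : |γ ^ t * φ (τ t)| = γ ^ t * |φ (τ t)| := by
      rw [abs_mul, abs_of_nonneg (pow_nonneg hγ0 t)]
    rw [Real.norm_eq_abs, this]
    exact mul_le_mul_of_nonneg_left (hφb _) (pow_nonneg hγ0 t)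
  -- pointwise identity
  have key : ∀ τ : ℕ → S × A,
      (∑' t : ℕ, γ ^ t * (R (τ t) + (γ * φ (τ (t + 1)) - φ (τ t))))
        = (∑' t : ℕ, γ ^ t * R (τ t)) - φ (τ 0) := by
    intro τ
    set a : ℕ → ℝ := fun t => γ ^ t * φ (τ t) with ha
    have hA : Summable a := hasum τ
    have hA1 : Summable (fun t => a (t + 1)) := by
      have := (summable_nat_add_iff 1).2 hA
      simpa using this
    have hshift : (∑' t : ℕ, a (t + 1)) = (∑' t, a t) - a 0 := by
      have := (Summable.tsum_eq_zero_add hA)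
      rw [this]; ring
    have hdiff : Summable (fun t => a (t + 1) - a t) := hA1.sub hA
    have htele : (∑' t : ℕ, (a (t + 1) - a t)) = - a 0 := by
      rw [Summable.tsum_sub hA1 hA, hshift]; ring
    have hrw : ∀ t : ℕ, γ ^ t * (R (τ t) + (γ * φ (τ (t + 1)) - φ (τ t)))
        = γ ^ t * R (τ t) + (a (t + 1) - a t) := by
      intro t; simp only [ha]; ring
    calc (∑' t : ℕ, γ ^ t * (R (τ t) + (γ * φ (τ (t + 1)) - φ (τ t))))
        = ∑' t : ℕ, (γ ^ t * R (τ t) + (a (t + 1) - a t)) := by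
          exact tsum_congr hrw
      _ = (∑' t : ℕ, γ ^ t * R (τ t)) + ∑' t : ℕ, (a (t + 1) - a t) :=
          Summable.tsum_add (hbsum τ) hdiff
      _ = (∑' t : ℕ, γ ^ t * R (τ t)) - φ (τ 0) := by
          rw [htele]; simp [ha, sub_eq_add_neg]
  simp only [key]
  -- integrability
  have hmeas0 : Measurable fun τ : ℕ → S × A => φ (τ 0) :=
    hφm.comp (measurable_pi_apply 0)
  have hint0 : Integrable (fun τ : ℕ → S × A => φ (τ 0)) μ := by
    apply Integrable.mono' (integrable_const Cφ) hmeas0.aestronglyMeasurable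
    filter_upwards with τ
    simpa using hφb (τ 0)
  have hmeasF : Measurable fun τ : ℕ → S × A => ∑' t : ℕ, γ ^ t * R (τ t) := by
    apply measurable_of_tendsto_metrizable
      (f := fun n τ => ∑ t ∈ Finset.range n, γ ^ t * R (τ t))
    · intro n
      exact Finset.measurable_sum _ fun t _ =>
        (measurable_const.mul (hRm.comp (measurable_pi_apply t)))
    · rw [tendsto_pi_nhds]
      intro τ
      exact (hbsum τ).hasSum.tendsto_sum_nat
  have hintF : Integrable (fun τ : ℕ → S × A => ∑' t : ℕ, γ ^ t * R (τ t)) μ := by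
    apply Integrable.mono' (integrable_const (CR / (1 - γ))) hmeasF.aestronglyMeasurable
    filter_upwards with τ
    rw [Real.norm_eq_abs]
    calc |∑' t : ℕ, γ ^ t * R (τ t)| ≤ ∑' t : ℕ, |γ ^ t * R (τ t)| := by
          have h := norm_tsum_le_tsum_norm (f := fun t => γ ^ t * R (τ t))
            (by simpa only [Real.norm_eq_abs] using (hbsum τ).abs)
          simpa only [Real.norm_eq_abs] using h
      _ ≤ ∑' t : ℕ, γ ^ t * CR := by
          apply Summable.tsum_le_tsum _ ((hbsum τ).abs) (hgeo.mul_right CR)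
          intro t
          rw [abs_mul, abs_of_nonneg (pow_nonneg hγ0 t)]
          exact mul_le_mul_of_nonneg_left (hRb _) (pow_nonneg hγ0 t)
      _ = CR / (1 - γ) := by
          rw [tsum_mul_right, tsum_geometric_of_lt_one hγ0 hγ1]
          field_simp
  exact integral_sub hintF hint0
end

section
/- Let S and A be nonempty finite types, d a natural number, and θ₀ ∈ ℝ^d. Let ρ : S → ℝ be a probability mass function on S (ρ(s) ≥ 0 and ∑_s ρ(s) = 1), and let π : ℝ^d → S → A → ℝ satisfy: π(θ)(s)(a) > 0 for all θ, s, a; ∑_{a ∈ A} π(θ)(s)(a) = 1 for all θ, s; and for each s, a the map θ ↦ π(θ)(s)(a) is differentiable at θ₀. Then for any functions δ : S × A → ℝ and g : S → ℝ, ∑_{s ∈ S} ∑_{a ∈ A} ρ(s) · π(θ₀)(s)(a) · (δ(s,a) + g(s)) • D(s,a) = ∑_{s ∈ S} ∑_{a ∈ A} ρ(s) · π(θ₀)(s)(a) · δ(s,a) • D(s,a), where D(s,a) ∈ ℝ^d denotes the gradient at θ₀ of the map θ ↦ log π(θ)(s)(a). -/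
open scoped Gradient

section Gradient

variable {E : Type*} [NormedAddCommGroup E] [InnerProductSpace ℝ E] [CompleteSpace E]

theorem gradient_log_comp {f : E → ℝ} {x : E} (hf : DifferentiableAt ℝ f x) (hx : f x ≠ 0) :
    ∇ (fun y => Real.log (f y)) x = (f x)⁻¹ • ∇ f x := by
  have h : HasFDerivAt (fun y => Real.log (f y)) ((f x)⁻¹ • fderiv ℝ f x) x :=
    (Real.hasDerivAt_log hx).comp_hasFDerivAt x hf.hasFDerivAt
  rw [gradient, h.fderiv, map_smul, gradient]

theorem gradient_fun_sum {ι : Type*} {s : Finset ι} {f : ι → E → ℝ} {x : E}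
    (hf : ∀ i ∈ s, DifferentiableAt ℝ (f i) x) :
    ∇ (fun y => ∑ i ∈ s, f i y) x = ∑ i ∈ s, ∇ (f i) x := by
  simp only [gradient, fderiv_fun_sum hf, map_sum]

theorem sum_smul_gradient_log_eq_zero {A : Type*} [Fintype A] {p : E → A → ℝ} {x : E}
    (hne : ∀ a, p x a ≠ 0) (hsum : ∀ θ, ∑ a, p θ a = 1)
    (hdiff : ∀ a, DifferentiableAt ℝ (fun θ => p θ a) x) :
    ∑ a, p x a • ∇ (fun θ => Real.log (p θ a)) x = 0 := by
  have hscore : ∀ a, p x a • ∇ (fun θ => Real.log (p θ a)) x = ∇ (fun θ => p θ a) x := by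
    intro a
    rw [gradient_log_comp (hdiff a) (hne a), smul_smul, mul_inv_cancel₀ (hne a), one_smul]
  calc ∑ a, p x a • ∇ (fun θ => Real.log (p θ a)) x
      = ∇ (fun θ => ∑ a, p θ a) x := by
        simp only [hscore, gradient_fun_sum fun a _ => hdiff a]
    _ = 0 := by simp only [hsum, gradient_fun_const]

end Gradient

theorem state_function_baseline_does_not_change_policy_gradient_general
    {S A : Type*} [Fintype S] [Fintype A]
    (d : ℕ) (θ₀ : EuclideanSpace ℝ (Fin d))
    (ρ : S → ℝ)
    (p : EuclideanSpace ℝ (Fin d) → S → A → ℝ)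
    (hpos : ∀ θ s a, 0 < p θ s a)
    (hsum : ∀ θ s, ∑ a, p θ s a = 1)
    (hdiff : ∀ s a, DifferentiableAt ℝ (fun θ => p θ s a) θ₀)
    (δ : S × A → ℝ) (g : S → ℝ) :
    ∑ s, ∑ a, (ρ s * p θ₀ s a * (δ (s, a) + g s)) •
        gradient (fun θ => Real.log (p θ s a)) θ₀
      = ∑ s, ∑ a, (ρ s * p θ₀ s a * δ (s, a)) •
          gradient (fun θ => Real.log (p θ s a)) θ₀ := by
  refine Finset.sum_congr rfl fun s _ => ?_
  have hscore := sum_smul_gradient_log_eq_zero (p := fun θ => p θ s)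
    (fun a => (hpos θ₀ s a).ne') (fun θ => hsum θ s) (hdiff s)
  calc ∑ a, (ρ s * p θ₀ s a * (δ (s, a) + g s)) • gradient (fun θ => Real.log (p θ s a)) θ₀
      = ∑ a, (ρ s * p θ₀ s a * δ (s, a)) • gradient (fun θ => Real.log (p θ s a)) θ₀
        + (ρ s * g s) • ∑ a, p θ₀ s a • gradient (fun θ => Real.log (p θ s a)) θ₀ := by
        simp only [Finset.smul_sum, ← Finset.sum_add_distrib, smul_smul, ← add_smul]
        congr! 2
        ring
    _ = ∑ a, (ρ s * p θ₀ s a * δ (s, a)) • gradient (fun θ => Real.log (p θ s a)) θ₀ := by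
        rw [hscore, smul_zero, add_zero]

theorem state_function_baseline_does_not_change_policy_gradient
    {S A : Type*} [Fintype S] [Fintype A] [Nonempty S] [Nonempty A]
    (d : ℕ) (θ₀ : EuclideanSpace ℝ (Fin d))
    (ρ : S → ℝ) (hρ0 : ∀ s, 0 ≤ ρ s) (hρ1 : ∑ s, ρ s = 1)
    (p : EuclideanSpace ℝ (Fin d) → S → A → ℝ)
    (hpos : ∀ θ s a, 0 < p θ s a)
    (hsum : ∀ θ s, ∑ a, p θ s a = 1)
    (hdiff : ∀ s a, DifferentiableAt ℝ (fun θ => p θ s a) θ₀)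
    (δ : S × A → ℝ) (g : S → ℝ) :
    ∑ s, ∑ a, (ρ s * p θ₀ s a * (δ (s, a) + g s)) •
        gradient (fun θ => Real.log (p θ s a)) θ₀
      = ∑ s, ∑ a, (ρ s * p θ₀ s a * δ (s, a)) •
          gradient (fun θ => Real.log (p θ s a)) θ₀ :=
  state_function_baseline_does_not_change_policy_gradient_general d θ₀ ρ p hpos hsum hdiff δ g
end
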